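/- Let A be an N×N real matrix, ε > 0, φ ∈ ℝ, and θ₀ = (θ₁,…,θ_N) ∈ ℝ^N. Suppose the complex vector x₀ with components (x₀)_k = exp(i θ_k) is an eigenvector of A associated with a complex eigenvalue λ such that λ exp(−iφ) is real. Then for every t ≥ 0 the solution x(t) = exp(t ε e^{−iφ} A) x₀ of the phase-lag analytical Kuramoto model satisfies x(t) = exp(t ε e^{−iφ} λ) x₀, and for every index k the complex argument of x(t)_k equals the complex argument of (x₀)_k. (That is, θ₀ is an equilibrium point of the phase-lag analytical Kuramoto model.) -/

import Mathlib

/-! The eigenvector `x₀` of `A` is an eigenvector of `exp (t ε e^{-iφ} A)` with eigenvalue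
`exp (t ε e^{-iφ} λ)`; as `t ε e^{-iφ} λ` is real, that eigenvalue is a positive real number,
which leaves every argument unchanged. -/

open Complex Matrix

section

attribute [local instance] Matrix.linftyOpNormedRing Matrix.linftyOpNormedAlgebra

theorem Matrix.exp_mulVec_of_mulVec_eq_smul {ι 𝕂 : Type*} [Fintype ι] [DecidableEq ι] [RCLike 𝕂]
    {M : Matrix ι ι 𝕂} {v : ι → 𝕂} {c : 𝕂} (hv : M *ᵥ v = c • v) :
    NormedSpace.exp M *ᵥ v = NormedSpace.exp c • v := by
  have hpow (n : ℕ) : M ^ n *ᵥ v = c ^ n • v := by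
    induction n with
    | zero => simp
    | succ n ih => rw [pow_succ', ← mulVec_mulVec, ih, mulVec_smul, hv, smul_smul, pow_succ]
  let applyTo : Matrix ι ι 𝕂 →+ (ι → 𝕂) := AddMonoidHom.mk' (· *ᵥ v) (fun A B => add_mulVec A B v)
  have hM := (NormedSpace.exp_series_hasSum_exp' (𝕂 := 𝕂) M).map applyTo
    (continuous_id.matrix_mulVec continuous_const)
  have hc := (NormedSpace.exp_series_hasSum_exp' (𝕂 := 𝕂) c).smul_const v
  refine hM.unique ?_
  convert hc using 2 with n
  simp [applyTo, smul_mulVec, hpow, smul_smul]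

end

theorem Complex.arg_exp_mul_of_im_eq_zero {z : ℂ} (hz : z.im = 0) (w : ℂ) :
    arg (exp z * w) = arg w := by
  rw [← re_add_im z, hz, ofReal_zero, zero_mul, add_zero, ← ofReal_exp]
  exact arg_real_mul w (Real.exp_pos _)

theorem phase_lag_analytical_KM_equilibrium_general (N : ℕ) (A : Matrix (Fin N) (Fin N) ℝ)
    (ε : ℝ) (φ : ℝ) (θ : Fin N → ℝ) (lam : ℂ)
    (hx : (A.map Complex.ofReal).mulVec (fun k => Complex.exp (Complex.I * θ k))
        = lam • fun k => Complex.exp (Complex.I * θ k))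
    (hreal : (lam * Complex.exp (-(φ : ℂ) * Complex.I)).im = 0) :
    ∀ t : ℝ, 0 ≤ t →
      (NormedSpace.exp
          (((t : ℂ) * (ε : ℂ) * Complex.exp (-(φ : ℂ) * Complex.I)) •
            A.map Complex.ofReal)).mulVec (fun k => Complex.exp (Complex.I * θ k))
        = Complex.exp ((t : ℂ) * (ε : ℂ) * Complex.exp (-(φ : ℂ) * Complex.I) * lam) •
          (fun k => Complex.exp (Complex.I * θ k)) ∧
      ∀ k : Fin N,
        ((NormedSpace.exp
            (((t : ℂ) * (ε : ℂ) * Complex.exp (-(φ : ℂ) * Complex.I)) •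
              A.map Complex.ofReal)).mulVec
            (fun k => Complex.exp (Complex.I * θ k)) k).arg
          = (Complex.exp (Complex.I * θ k)).arg := by
  intro t _
  set c : ℂ := (t : ℂ) * ε * exp (-(φ : ℂ) * I)
  have hexp := exp_mulVec_of_mulVec_eq_smul (M := c • A.map ofReal) (c := c * lam)
    (by rw [smul_mulVec, hx, smul_smul])
  rw [← exp_eq_exp_ℂ] at hexp
  have hreal_c : (c * lam).im = 0 := by
    have : c * lam = ((t * ε : ℝ) : ℂ) * (lam * exp (-(φ : ℂ) * I)) := by push_cast; ring
    rw [this, im_ofReal_mul, hreal, mul_zero]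
  refine ⟨hexp, fun k => ?_⟩
  rw [hexp, Pi.smul_apply, smul_eq_mul]
  exact arg_exp_mul_of_im_eq_zero hreal_c _

/-- If `x₀ = e^{iθ₀}` (componentwise) is an eigenvector of the real matrix `A`
associated with a complex eigenvalue `λ` such that `λ e^{−iφ}` is real, then for all
`t ≥ 0` the solution `x(t) = exp(t ε e^{−iφ} A) x₀` of the phase-lag analytical Kuramoto
model satisfies `x(t) = e^{t ε e^{−iφ} λ} x₀`, and componentwise the argument of `x(t)`
equals that of `x₀`: `θ₀` is an equilibrium point of the phase-lag analytical
Kuramoto model. -/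
theorem phase_lag_analytical_KM_equilibrium (N : ℕ) (A : Matrix (Fin N) (Fin N) ℝ)
    (ε : ℝ) (hε : 0 < ε) (φ : ℝ) (θ : Fin N → ℝ) (lam : ℂ)
    (hx : (A.map Complex.ofReal).mulVec (fun k => Complex.exp (Complex.I * θ k))
        = lam • fun k => Complex.exp (Complex.I * θ k))
    (hreal : (lam * Complex.exp (-(φ : ℂ) * Complex.I)).im = 0) :
    ∀ t : ℝ, 0 ≤ t →
      (NormedSpace.exp
          (((t : ℂ) * (ε : ℂ) * Complex.exp (-(φ : ℂ) * Complex.I)) •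
            A.map Complex.ofReal)).mulVec (fun k => Complex.exp (Complex.I * θ k))
        = Complex.exp ((t : ℂ) * (ε : ℂ) * Complex.exp (-(φ : ℂ) * Complex.I) * lam) •
          (fun k => Complex.exp (Complex.I * θ k)) ∧
      ∀ k : Fin N,
        ((NormedSpace.exp
            (((t : ℂ) * (ε : ℂ) * Complex.exp (-(φ : ℂ) * Complex.I)) •
              A.map Complex.ofReal)).mulVec
            (fun k => Complex.exp (Complex.I * θ k)) k).arg
          = (Complex.exp (Complex.I * θ k)).arg :=
  phase_lag_analytical_KM_equilibrium_general N A ε φ θ lam hx hreal
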